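/- Let n ≥ 6, let G be a solvable group, and let g_1, …, g_{n−1} ∈ G satisfy the braid relations: g_i g_{i+1} g_i = g_{i+1} g_i g_{i+1} for 1 ≤ i ≤ n−2, and g_i g_j = g_j g_i whenever |i−j| ≥ 2. Then g_1 = g_2 = ⋯ = g_{n−1}. Equivalently, for n ≥ 6 every homomorphism from the braid group B_n to a solvable group is constant. -/

import Mathlib

/-!
If all `gᵢ` lie in one left coset of a normal subgroup `M`, they lie in one left coset of
`⁅M, M⁆`. Indeed, in `G ⧸ ⁅M, M⁆` the image of `M` is abelian; write `gᵢ = y u` with `y = gᵢ₊₁`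
and `u` in that image, and pick a generator `z = gₖ` commuting with both (possible as `n ≥ 6`).
Then `y = z (z⁻¹ y)` commutes with `u` since both factors do, so the braid relation becomes
`y³ u² = y³ u`, i.e. `u = 1`. Descending the derived series of `G` to `⊥` makes all `gᵢ` equal.
-/

structure IsBraidTuple {G : Type*} [Group G] (n : ℕ) (g : ℕ → G) : Prop where
  braid : ∀ i, 1 ≤ i → i ≤ n - 2 → g i * g (i + 1) * g i = g (i + 1) * g i * g (i + 1)
  comm : ∀ i j, 1 ≤ i → i ≤ n - 1 → 1 ≤ j → j ≤ n - 1 →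
    2 ≤ |(i : ℤ) - (j : ℤ)| → g i * g j = g j * g i

theorem IsBraidTuple.map {G H : Type*} [Group G] [Group H] {n : ℕ} {g : ℕ → G}
    (hg : IsBraidTuple n g) (f : G →* H) : IsBraidTuple n (f ∘ g) where
  braid i hi hin := by simp only [Function.comp_apply, ← map_mul, hg.braid i hi hin]
  comm i j hi hin hj hjn hij := by
    simp only [Function.comp_apply, ← map_mul, hg.comm i j hi hin hj hjn hij]

theorem eq_of_braid_of_commute_inv_mul {G : Type*} [Group G] {x y : G}
    (hbraid : x * y * x = y * x * y) (hcomm : Commute y (y⁻¹ * x)) : x = y := by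
  obtain ⟨u, rfl⟩ : ∃ u, x = y * u := ⟨y⁻¹ * x, (mul_inv_cancel_left y x).symm⟩
  rw [inv_mul_cancel_left] at hcomm
  have hyyy : y * y * y * (u * u) = y * y * y * u := by
    simpa only [mul_assoc, hcomm.eq.symm, hcomm.symm.left_comm] using hbraid
  rw [mul_left_cancel_iff, mul_eq_left] at hyyy
  rw [hyyy, mul_one]

theorem eq_of_braid_of_commute_of_inv_mul_mem {G : Type*} [Group G] {A : Subgroup G}
    [IsMulCommutative A] {x y z : G} (hbraid : x * y * x = y * x * y) (hxz : Commute x z)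
    (hyz : Commute y z) (hyx : y⁻¹ * x ∈ A) (hzy : z⁻¹ * y ∈ A) : x = y := by
  refine eq_of_braid_of_commute_inv_mul hbraid ?_
  have hz : Commute z (y⁻¹ * x) := (hyz.inv_left.mul_left hxz).symm
  have hA : Commute (z⁻¹ * y) (y⁻¹ * x) := setLike_mul_comm hzy hyx
  simpa only [mul_inv_cancel_left] using hz.mul_left hA

theorem exists_far_from_adjacent {n i : ℕ} (hn : 6 ≤ n) (hi : 1 ≤ i) (hin : i + 1 ≤ n - 1) :
    ∃ k, 1 ≤ k ∧ k ≤ n - 1 ∧ 2 ≤ |(i : ℤ) - k| ∧ 2 ≤ |((i + 1 : ℕ) : ℤ) - k| := by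
  rcases le_or_gt i 2 with hi2 | hi2
  · refine ⟨i + 3, by omega, by omega, ?_, ?_⟩ <;> push_cast <;> rw [le_abs] <;> omega
  · refine ⟨i - 2, by omega, by omega, ?_, ?_⟩ <;> push_cast [show 2 ≤ i by omega] <;>
      rw [le_abs] <;> omega

theorem eq_of_forall_eq_succ {α : Type*} {f : ℕ → α} {m : ℕ}
    (h : ∀ i, 1 ≤ i → i + 1 ≤ m → f i = f (i + 1)) :
    ∀ i j, 1 ≤ i → i ≤ m → 1 ≤ j → j ≤ m → f i = f j := by
  have h1 : ∀ i, 1 ≤ i → i ≤ m → f i = f 1 := by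
    intro i hi
    induction i, hi using Nat.le_induction with
    | base => exact fun _ => rfl
    | succ i hi ih => exact fun him => (h i hi him).symm.trans (ih (by omega))
  intro i j hi him hj hjm
  rw [h1 i hi him, h1 j hj hjm]

theorem IsBraidTuple.inv_mul_mem_commutator {G : Type*} [Group G] {n : ℕ} {g : ℕ → G}
    (hg : IsBraidTuple n g) (hn : 6 ≤ n) {M : Subgroup G} [M.Normal]
    (hM : ∀ i j, 1 ≤ i → i ≤ n - 1 → 1 ≤ j → j ≤ n - 1 → (g i)⁻¹ * g j ∈ M) :
    ∀ i j, 1 ≤ i → i ≤ n - 1 → 1 ≤ j → j ≤ n - 1 → (g i)⁻¹ * g j ∈ ⁅M, M⁆ := by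
  let π := QuotientGroup.mk' ⁅M, M⁆
  have : IsMulCommutative (M.map π) := by
    rw [← Subgroup.commutator_self_eq_bot_iff, ← Subgroup.map_commutator,
      Subgroup.map_eq_bot_iff, QuotientGroup.ker_mk']
  have hπ := hg.map π
  have hπM : ∀ i j, 1 ≤ i → i ≤ n - 1 → 1 ≤ j → j ≤ n - 1 → (π (g i))⁻¹ * π (g j) ∈ M.map π :=
    fun i j hi hin hj hjn => by
      simpa only [map_mul, map_inv] using Subgroup.mem_map_of_mem π (hM i j hi hin hj hjn)
  have hadj : ∀ i, 1 ≤ i → i + 1 ≤ n - 1 → π (g i) = π (g (i + 1)) := by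
    intro i hi hin
    obtain ⟨k, hk, hkn, hik, hik'⟩ := exists_far_from_adjacent hn hi hin
    exact eq_of_braid_of_commute_of_inv_mul_mem (hπ.braid i hi (by omega))
      (hπ.comm i k hi (by omega) hk hkn hik) (hπ.comm (i + 1) k (by omega) hin hk hkn hik')
      (hπM (i + 1) i (by omega) hin hi (by omega)) (hπM k (i + 1) hk hkn (by omega) hin)
  intro i j hi hin hj hjn
  exact QuotientGroup.eq.mp (eq_of_forall_eq_succ hadj i j hi hin hj hjn)

/-- Proposition 2.9: for `n ≥ 6`, every homomorphism from the braid group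
`B_n` to a solvable group is constant. -/
theorem braid_constant_of_solvable
    (n : ℕ) (hn : 6 ≤ n) (G : Type*) [Group G] [Group.IsSolvable G] (g : ℕ → G)
    (hbraid : ∀ i, 1 ≤ i → i ≤ n - 2 →
      g i * g (i + 1) * g i = g (i + 1) * g i * g (i + 1))
    (hcomm : ∀ i j, 1 ≤ i → i ≤ n - 1 → 1 ≤ j → j ≤ n - 1 →
      2 ≤ |(i : ℤ) - (j : ℤ)| → g i * g j = g j * g i) :
    ∀ i j, 1 ≤ i → i ≤ n - 1 → 1 ≤ j → j ≤ n - 1 → g i = g j := by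
  have hg : IsBraidTuple n g := ⟨hbraid, hcomm⟩
  have hD : ∀ k, ∀ i j, 1 ≤ i → i ≤ n - 1 → 1 ≤ j → j ≤ n - 1 →
      (g i)⁻¹ * g j ∈ derivedSeries G k := by
    intro k
    induction k with
    | zero => simp only [derivedSeries_zero, Subgroup.mem_top, implies_true]
    | succ k ih => simpa only [derivedSeries_succ] using hg.inv_mul_mem_commutator hn ih
  obtain ⟨m, hm⟩ := Group.IsSolvable.solvable (G := G)
  intro i j hi hin hj hjn
  simpa only [hm, Subgroup.mem_bot, inv_mul_eq_one] using hD m i j hi hin hj hjn
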